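/- Let V : [0,T] × ℝⁿ → ℝⁿ be C¹ with divergence div_x V, let X(s,t,x) be its C¹ flow with ∂_s X(s,t,x) = V(s, X(s,t,x)), X(t,t,x) = x, and define J(s,t,x) := det(D_x X(s,t,x)). Then J satisfies the Liouville formula ∂_s J(s,t,x) = div_x V(s, X(s,t,x)) · J(s,t,x), and hence J(s,t,x) = exp(∫_t^s div_x V(τ, X(τ,t,x)) dτ); in particular J(s,t,x) > 0 and J(t,t,x) = 1. -/

import Mathlib

/-!
Writing the flow in integral form, `X(σ,t,y) = X(s,t,y) + ∫ₛ^σ V(τ, X(τ,t,y)) dτ`, and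
differentiating under the integral in `y` shows that `D_x X` solves the variational equation
`∂ₛ D_x X = D_x V · D_x X`; with only `C¹` regularity this replaces exchanging `∂ₛ` and `D_x`.
Jacobi's formula `(det M)' = tr (adj M · M')` then gives `∂ₛ J = tr (D_x V) · J = div_x V · J`,
and since `J(t,t,x) = 1` this scalar linear equation integrates to `J = exp ∫ₜˢ div_x V > 0`.
-/

open Set

/-- The spatial divergence of the vector field `V` at time `s` and point `y`. -/
noncomputable def divX (n : ℕ) (V : ℝ → (Fin n → ℝ) → (Fin n → ℝ))
    (s : ℝ) (y : Fin n → ℝ) : ℝ :=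
  ∑ i, fderiv ℝ (fun z => V s z) y (Pi.single i 1) i

/-- The Jacobian determinant `J(s,t,x) = det(D_x X(s,t,x))` of the flow. -/
noncomputable def Jdet (n : ℕ) (X : ℝ → ℝ → (Fin n → ℝ) → (Fin n → ℝ))
    (s t : ℝ) (x : Fin n → ℝ) : ℝ :=
  LinearMap.det
    ((fderiv ℝ (fun y => X s t y) x : (Fin n → ℝ) →ₗ[ℝ] (Fin n → ℝ)))

open Function

theorem Matrix.hasDerivAt_det {𝕜 ι : Type*} [NontriviallyNormedField 𝕜] [Fintype ι]
    [DecidableEq ι] {M : 𝕜 → Matrix ι ι 𝕜} {M' : Matrix ι ι 𝕜} {s : 𝕜}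
    (h : ∀ i j, HasDerivAt (fun σ => M σ i j) (M' i j) s) :
    HasDerivAt (fun σ => (M σ).det) ((M s).adjugate * M').trace s := by
  have hterm (p : Equiv.Perm ι) (j : ι) :
      (∏ i ∈ Finset.univ.erase j, M s (p i) i) • M' (p j) j
        = ∏ i, (M s).updateCol j (fun k => M' k j) (p i) i := by
    rw [← Finset.mul_prod_erase _ _ (Finset.mem_univ j), smul_eq_mul, mul_comm]
    congr 1
    · simp
    · exact Finset.prod_congr rfl fun i hi => by simp [Finset.ne_of_mem_erase hi]
  have htrace : ((M s).adjugate * M').trace = ∑ j, ((M s).updateCol j fun k => M' k j).det := by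
    simp only [Matrix.trace, Matrix.diag, ← Matrix.cramer_apply, Matrix.cramer_eq_adjugate_mulVec]
    rfl
  simp_rw [Matrix.det_apply']
  refine (HasDerivAt.fun_sum fun p _ => (HasDerivAt.fun_finsetProd fun i _ =>
    h (p i) i).const_mul (Equiv.Perm.sign p : 𝕜)).congr_deriv ?_
  simp only [Finset.mul_sum, hterm, htrace, Matrix.det_apply']
  exact Finset.sum_comm

theorem Matrix.trace_adjugate_mul_mul_self {R ι : Type*} [CommRing R] [Fintype ι] [DecidableEq ι]
    (M B : Matrix ι ι R) : (M.adjugate * (B * M)).trace = B.trace * M.det := by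
  rw [Matrix.trace_mul_comm, Matrix.mul_assoc, Matrix.mul_adjugate, Matrix.mul_smul,
    Matrix.mul_one, Matrix.trace_smul, smul_eq_mul, mul_comm]

theorem ContinuousLinearMap.hasDerivAt_det_of_hasDerivAt_comp {𝕜 E : Type*}
    [NontriviallyNormedField 𝕜] [CompleteSpace 𝕜] [NormedAddCommGroup E] [NormedSpace 𝕜 E]
    [FiniteDimensional 𝕜 E] {A : 𝕜 → E →L[𝕜] E} {B : E →L[𝕜] E} {s : 𝕜}
    (h : HasDerivAt A (B.comp (A s)) s) :
    HasDerivAt (fun σ => LinearMap.det (A σ : E →ₗ[𝕜] E))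
      (LinearMap.trace 𝕜 E B * LinearMap.det (A s : E →ₗ[𝕜] E)) s := by
  classical
  let b := Module.finBasis 𝕜 E
  have hentry (i j) : HasDerivAt (fun σ => LinearMap.toMatrix b b (A σ) i j)
      (LinearMap.toMatrix b b (B.comp (A s)) i j) s := by
    let entry : (E →L[𝕜] E) →L[𝕜] 𝕜 :=
      (ContinuousLinearMap.proj i).comp (b.equivFunL.toContinuousLinearMap.comp
        (ContinuousLinearMap.apply 𝕜 E (b j)))
    simp only [LinearMap.toMatrix_apply]
    exact entry.hasFDerivAt.comp_hasDerivAt s h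
  simp_rw [← LinearMap.det_toMatrix b, LinearMap.trace_eq_matrix_trace 𝕜 b]
  convert Matrix.hasDerivAt_det hentry using 1
  rw [ContinuousLinearMap.toLinearMap_comp, LinearMap.toMatrix_comp b b b,
    Matrix.trace_adjugate_mul_mul_self]

section Partial

variable {𝕜 G E F : Type*} [NontriviallyNormedField 𝕜] [NormedAddCommGroup G] [NormedSpace 𝕜 G]
  [NormedAddCommGroup E] [NormedSpace 𝕜 E] [NormedAddCommGroup F] [NormedSpace 𝕜 F]
  {f : G → E → F}

theorem ContDiff.differentiable_right (hf : ContDiff 𝕜 1 (uncurry f)) (a : G) :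
    Differentiable 𝕜 (f a) :=
  (hf.comp (contDiff_prodMk_right a)).differentiable one_ne_zero

theorem ContDiff.continuous_fderiv_right (hf : ContDiff 𝕜 1 (uncurry f)) :
    Continuous fun p : G × E => fderiv 𝕜 (f p.1) p.2 := by
  have hpartial (p : G × E) :
      fderiv 𝕜 (f p.1) p.2 = (fderiv 𝕜 (uncurry f) p).comp (ContinuousLinearMap.inr 𝕜 G E) :=
    ((hf.differentiable one_ne_zero p).hasFDerivAt.comp p.2
      (hasFDerivAt_prodMk_right (𝕜 := 𝕜) p.1 p.2) :).fderiv
  simp_rw [hpartial]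
  exact (hf.continuous_fderiv one_ne_zero).clm_comp continuous_const

end Partial

theorem intervalIntegral.hasFDerivAt_integral_of_continuous_fderiv {𝕜 H E : Type*} [RCLike 𝕜]
    [NormedAddCommGroup H] [NormedSpace 𝕜 H] [LocallyCompactSpace H] [NormedAddCommGroup E]
    [NormedSpace ℝ E] [NormedSpace 𝕜 E] {F : H → ℝ → E} {F' : H → ℝ → H →L[𝕜] E}
    (hF : Continuous (uncurry F)) (hF' : Continuous (uncurry F'))
    (hdiff : ∀ x τ, HasFDerivAt (fun y => F y τ) (F' x τ) x) (a b : ℝ) (x₀ : H) :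
    HasFDerivAt (fun x => ∫ τ in a..b, F x τ) (∫ τ in a..b, F' x₀ τ) x₀ := by
  obtain ⟨K, hK, hKx₀⟩ := exists_compact_mem_nhds x₀
  obtain ⟨C, hC⟩ := (hK.prod isCompact_uIcc).exists_bound_of_continuousOn hF'.continuousOn
  have hF_sec (x : H) : Continuous (F x) := hF.comp (Continuous.prodMk_right x)
  exact intervalIntegral.hasFDerivAt_integral_of_dominated_of_fderiv_le (bound := fun _ => C)
    hKx₀ (.of_forall fun x => (hF_sec x).aestronglyMeasurable)
    ((hF_sec x₀).intervalIntegrable a b)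
    (hF'.comp (Continuous.prodMk_right x₀)).aestronglyMeasurable
    (.of_forall fun τ hτ x hx => hC (x, τ) ⟨hx, uIoc_subset_uIcc hτ⟩) intervalIntegrable_const
    (.of_forall fun τ _ x _ => hdiff x τ)

theorem eq_mul_exp_integral_of_hasDerivAt {f a : ℝ → ℝ} (ha : Continuous a)
    (hf : ∀ σ, HasDerivAt f (a σ * f σ) σ) (t s : ℝ) :
    f s = f t * Real.exp (∫ τ in t..s, a τ) := by
  have hint (σ : ℝ) : HasDerivAt (fun σ => ∫ τ in t..σ, a τ) (a σ) σ :=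
    (ha.integral_hasStrictDerivAt t σ).hasDerivAt
  have hconst (σ : ℝ) : HasDerivAt (fun σ => f σ * Real.exp (-∫ τ in t..σ, a τ)) 0 σ :=
    ((hf σ).fun_mul (hint σ).fun_neg.exp).congr_deriv (by ring)
  have key := is_const_of_deriv_eq_zero (fun σ => (hconst σ).differentiableAt)
    (fun σ => (hconst σ).deriv) s t
  simp only [intervalIntegral.integral_same, neg_zero, Real.exp_zero, mul_one, Real.exp_neg] at key
  rw [← key, mul_assoc, inv_mul_cancel₀ (Real.exp_pos _).ne', mul_one]

theorem hasDerivAt_fderiv_of_hasDerivAt_flow {E : Type*} [NormedAddCommGroup E]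
    [NormedSpace ℝ E] [FiniteDimensional ℝ E] {V φ : ℝ → E → E}
    (hV : ContDiff ℝ 1 (uncurry V)) (hφ : ContDiff ℝ 1 (uncurry φ))
    (hflow : ∀ s x, HasDerivAt (fun σ => φ σ x) (V s (φ s x)) s) (s : ℝ) (x : E) :
    HasDerivAt (fun σ => fderiv ℝ (φ σ) x)
      ((fderiv ℝ (V s) (φ s x)).comp (fderiv ℝ (φ s) x)) s := by
  have hφ_swap : Continuous fun p : E × ℝ => φ p.2 p.1 := hφ.continuous.comp continuous_swap
  have hVφ : Continuous fun p : E × ℝ => V p.2 (φ p.2 p.1) :=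
    hV.continuous.comp (continuous_snd.prodMk hφ_swap)
  have hVφ' : Continuous fun p : E × ℝ =>
      (fderiv ℝ (V p.2) (φ p.2 p.1)).comp (fderiv ℝ (φ p.2) p.1) :=
    (hV.continuous_fderiv_right.comp (continuous_snd.prodMk hφ_swap)).clm_comp
      (hφ.continuous_fderiv_right.comp continuous_swap)
  have hchain (y : E) (τ : ℝ) : HasFDerivAt (fun z => V τ (φ τ z))
      ((fderiv ℝ (V τ) (φ τ y)).comp (fderiv ℝ (φ τ) y)) y :=
    (hV.differentiable_right τ _).hasFDerivAt.comp y (hφ.differentiable_right τ y).hasFDerivAt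
  have hintegral (σ : ℝ) : φ σ = fun y => φ s y + ∫ τ in s..σ, V τ (φ τ y) := by
    funext y
    rw [intervalIntegral.integral_eq_sub_of_hasDerivAt (fun τ _ => hflow τ y)
      ((hVφ.comp (Continuous.prodMk_right y)).intervalIntegrable s σ)]
    abel
  have hvariational (σ : ℝ) : fderiv ℝ (φ σ) x = fderiv ℝ (φ s) x +
      ∫ τ in s..σ, (fderiv ℝ (V τ) (φ τ x)).comp (fderiv ℝ (φ τ) x) := by
    rw [hintegral σ]
    exact ((hφ.differentiable_right s x).hasFDerivAt.add
      (intervalIntegral.hasFDerivAt_integral_of_continuous_fderiv (F := fun y τ => V τ (φ τ y))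
        (F' := fun y τ => (fderiv ℝ (V τ) (φ τ y)).comp (fderiv ℝ (φ τ) y))
        hVφ hVφ' hchain s σ x)).fderiv
  rw [funext hvariational]
  exact ((hVφ'.comp (Continuous.prodMk_right x)).integral_hasStrictDerivAt s s).hasDerivAt
    |>.const_add _

theorem divX_eq_trace (n : ℕ) (V : ℝ → (Fin n → ℝ) → (Fin n → ℝ)) (s : ℝ) (y : Fin n → ℝ) :
    divX n V s y = LinearMap.trace ℝ (Fin n → ℝ) (fderiv ℝ (V s) y) := by
  rw [LinearMap.trace_eq_matrix_trace ℝ (Pi.basisFun ℝ (Fin n)), LinearMap.toMatrix_eq_toMatrix']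
  simp [divX, Matrix.trace, LinearMap.toMatrix'_apply]

theorem ContDiff.continuous_divX {n : ℕ} {V : ℝ → (Fin n → ℝ) → (Fin n → ℝ)}
    (hV : ContDiff ℝ 1 (uncurry V)) : Continuous fun p : ℝ × (Fin n → ℝ) => divX n V p.1 p.2 :=
  continuous_finsetSum _ fun i _ =>
    (continuous_apply i).comp (hV.continuous_fderiv_right.clm_apply continuous_const)

/-- Liouville formula for the Jacobian of the characteristic flow:
`∂ₛJ = div_x V(s, X(s,t,x))·J`, hence
`J(s,t,x) = exp(∫ₜˢ div_x V(τ, X(τ,t,x)) dτ)`; in particular `J > 0` and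
`J(t,t,x) = 1`. -/
theorem liouville_formula (n : ℕ)
    (V : ℝ → (Fin n → ℝ) → (Fin n → ℝ))
    (hV : ContDiff ℝ 1 (fun p : ℝ × (Fin n → ℝ) => V p.1 p.2))
    (X : ℝ → ℝ → (Fin n → ℝ) → (Fin n → ℝ))
    (hX : ContDiff ℝ 1 (fun p : ℝ × ℝ × (Fin n → ℝ) => X p.1 p.2.1 p.2.2))
    (hflow : ∀ s t x, HasDerivAt (fun σ => X σ t x) (V s (X s t x)) s)
    (hinit : ∀ t x, X t t x = x) :
    (∀ s t x, HasDerivAt (fun σ => Jdet n X σ t x)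
        (divX n V s (X s t x) * Jdet n X s t x) s) ∧
    (∀ s t x, Jdet n X s t x = Real.exp (∫ τ in t..s, divX n V τ (X τ t x))) ∧
    (∀ s t x, 0 < Jdet n X s t x) ∧
    (∀ t x, Jdet n X t t x = 1) := by
  have hV' : ContDiff ℝ 1 (uncurry V) := hV
  have hφ (t : ℝ) : ContDiff ℝ 1 (uncurry fun σ y => X σ t y) :=
    hX.comp (contDiff_fst.prodMk (contDiff_const.prodMk contDiff_snd))
  have hJ_deriv (s t x) : HasDerivAt (fun σ => Jdet n X σ t x)
      (divX n V s (X s t x) * Jdet n X s t x) s := by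
    rw [divX_eq_trace]
    exact ContinuousLinearMap.hasDerivAt_det_of_hasDerivAt_comp
      (hasDerivAt_fderiv_of_hasDerivAt_flow hV' (hφ t) (fun s y => hflow s t y) s x)
  have hJ_self (t x) : Jdet n X t t x = 1 := by
    simp [Jdet, hinit]
  have hJ_exp (s t x) : Jdet n X s t x = Real.exp (∫ τ in t..s, divX n V τ (X τ t x)) := by
    have hdiv : Continuous fun τ => divX n V τ (X τ t x) := hV'.continuous_divX.comp
      (continuous_id.prodMk ((hφ t).continuous.comp (Continuous.prodMk_left x)))
    rw [eq_mul_exp_integral_of_hasDerivAt hdiv (fun σ => hJ_deriv σ t x) t s, hJ_self, one_mul]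
  exact ⟨hJ_deriv, hJ_exp, fun s t x => hJ_exp s t x ▸ Real.exp_pos _, hJ_self⟩
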